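/- arXiv:2502.13314 — 7 statements merged into one kernel-verified Lean document; each statement's English description precedes it below -/
import Mathlib

section
/- Let b > 0 and let Z be a Laplace(0,b) random variable. For any polynomial f(x) = x^k with k ≥ 2 and any real q, the estimator g(x) = x^k − b²·k(k−1)·x^{k−2} satisfies E[g(q+Z)] = q^k. -/
open MeasureTheory Real

/-- Density of the Laplace(0,b) distribution. -/
noncomputable def laplacePDF (b x : ℝ) : ℝ := (1 / (2 * b)) * Real.exp (-|x| / b)

open Set Filter Nat Finset

lemma intOn_Ioi {r : ℝ} (hr : 0 < r) (n : ℕ) :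
    IntegrableOn (fun x : ℝ => x ^ n * Real.exp (-(r * x))) (Set.Ioi 0) := by
  apply integrable_of_isBigO_exp_neg (half_pos hr)
  · exact ((continuous_pow n).mul (by continuity)).continuousOn
  · have l1 : Tendsto (fun x : ℝ => r / 2 * x) atTop atTop :=
      Tendsto.const_mul_atTop (half_pos hr) tendsto_id
    have l2 := (tendsto_pow_mul_exp_neg_atTop_nhds_zero n).comp l1
    have l3 := l2.const_mul ((2 / r) ^ n)
    rw [mul_zero] at l3
    have h0 : Tendsto (fun x : ℝ => x ^ n * Real.exp (-(r / 2 * x))) atTop (nhds 0) := by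
      refine l3.congr' ?_
      filter_upwards [eventually_ge_atTop (0:ℝ)] with x hx
      simp only [Function.comp]
      rw [mul_pow]
      have : (2 / r) ^ n * ((r / 2) ^ n * x ^ n) = x ^ n := by
        rw [← mul_assoc, ← mul_pow, show 2 / r * (r / 2) = 1 by field_simp]
        simp
      rw [← mul_assoc, this]
    rw [Asymptotics.isBigO_iff]
    refine ⟨1, ?_⟩
    have h1 : ∀ᶠ x : ℝ in atTop, |x ^ n * Real.exp (-(r / 2 * x))| < 1 := by
      have := h0.abs
      rw [abs_zero] at this
      exact this.eventually_lt_const one_pos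
    filter_upwards [h1, eventually_ge_atTop (0:ℝ)] with x hx hx0
    have h2 : Real.exp (-(r * x)) = Real.exp (-(r/2 * x)) * Real.exp (-(r/2 * x)) := by
      rw [← Real.exp_add]; ring_nf
    rw [Real.norm_eq_abs, Real.norm_eq_abs, h2, ← mul_assoc, abs_mul, neg_mul]
    exact mul_le_mul_of_nonneg_right hx.le (abs_nonneg _)

lemma intVal_Ioi {r : ℝ} (hr : 0 < r) (n : ℕ) :
    ∫ x in Set.Ioi (0:ℝ), x ^ n * Real.exp (-(r * x)) = (n ! : ℝ) / r ^ (n + 1) := by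
  have h := Real.integral_rpow_mul_exp_neg_mul_Ioi (a := (n:ℝ) + 1) (by positivity) hr
  rw [show ((n:ℝ) + 1 - 1) = (n:ℝ) by ring] at h
  rw [show (∫ x in Set.Ioi (0:ℝ), x ^ n * Real.exp (-(r * x)))
      = ∫ t in Set.Ioi (0:ℝ), t ^ ((n:ℝ)) * Real.exp (-(r * t)) by
    refine setIntegral_congr_fun measurableSet_Ioi fun x hx => ?_
    rw [Real.rpow_natCast]]
  rw [h, show ((n:ℝ) + 1) = ((n + 1 : ℕ) : ℝ) by push_cast; ring,
    Real.rpow_natCast]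
  rw [Nat.cast_add, Nat.cast_one, Real.Gamma_nat_eq_factorial]
  rw [one_div, inv_pow, inv_mul_eq_div]

lemma lap_Ioi {b : ℝ} (hb : 0 < b) (n : ℕ) :
    IntegrableOn (fun z : ℝ => z ^ n * laplacePDF b z) (Set.Ioi 0) := by
  have h := ((intOn_Ioi (inv_pos.2 hb) n).const_mul (1 / (2 * b)))
  refine MeasureTheory.IntegrableOn.congr_fun h (fun x hx => ?_) measurableSet_Ioi
  unfold laplacePDF
  rw [abs_of_pos hx, neg_div, div_eq_inv_mul]
  ring_nf

lemma lap_Iic {b : ℝ} (hb : 0 < b) (n : ℕ) :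
    IntegrableOn (fun z : ℝ => z ^ n * laplacePDF b z) (Set.Iic 0) := by
  rw [← Measure.map_neg_eq_self (volume : Measure ℝ)]
  have m : MeasurableEmbedding fun x : ℝ => -x := (Homeomorph.neg ℝ).measurableEmbedding
  rw [m.integrableOn_map_iff]
  simp_rw [Function.comp_def, neg_preimage, neg_Iic, neg_zero]
  rw [integrableOn_Ici_iff_integrableOn_Ioi]
  have h := ((intOn_Ioi (inv_pos.2 hb) n).const_mul ((-1) ^ n * (1 / (2 * b))))
  refine MeasureTheory.IntegrableOn.congr_fun h (fun x hx => ?_) measurableSet_Ioi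
  unfold laplacePDF
  rw [abs_neg, abs_of_pos hx, neg_pow, neg_div, div_eq_inv_mul]
  ring_nf

lemma lap_integrable {b : ℝ} (hb : 0 < b) (n : ℕ) :
    Integrable (fun z : ℝ => z ^ n * laplacePDF b z) := by
  rw [← integrableOn_univ, ← Set.Iic_union_Ioi (a := (0:ℝ))]
  exact (lap_Iic hb n).union (lap_Ioi hb n)

lemma lap_moment {b : ℝ} (hb : 0 < b) (n : ℕ) :
    ∫ z : ℝ, z ^ n * laplacePDF b z = ((1 + (-1:ℝ) ^ n) / 2) * (n ! : ℝ) * b ^ n := by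
  rw [← intervalIntegral.integral_Iic_add_Ioi (lap_Iic hb n) (lap_Ioi hb n)]
  have hIoi : ∫ z in Set.Ioi (0:ℝ), z ^ n * laplacePDF b z
      = (1 / (2 * b)) * ((n ! : ℝ) / b⁻¹ ^ (n + 1)) := by
    rw [show (∫ z in Set.Ioi (0:ℝ), z ^ n * laplacePDF b z)
        = ∫ z in Set.Ioi (0:ℝ), (1 / (2 * b)) * (z ^ n * Real.exp (-(b⁻¹ * z))) by
      refine setIntegral_congr_fun measurableSet_Ioi fun x hx => ?_
      unfold laplacePDF
      rw [abs_of_pos hx, neg_div, div_eq_inv_mul]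
      ring_nf]
    rw [integral_const_mul, intVal_Ioi (inv_pos.2 hb) n]
  have hIic : ∫ z in Set.Iic (0:ℝ), z ^ n * laplacePDF b z
      = ((-1) ^ n * (1 / (2 * b))) * ((n ! : ℝ) / b⁻¹ ^ (n + 1)) := by
    have e : ∫ z in Set.Iic (0:ℝ), z ^ n * laplacePDF b z
        = ∫ z in Set.Ioi (0:ℝ), (-z) ^ n * laplacePDF b (-z) := by
      rw [integral_comp_neg_Ioi (c := (0:ℝ)) (f := fun z => z ^ n * laplacePDF b z), neg_zero]
    rw [e, show (∫ z in Set.Ioi (0:ℝ), (-z) ^ n * laplacePDF b (-z))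
        = ∫ z in Set.Ioi (0:ℝ), ((-1) ^ n * (1 / (2 * b))) * (z ^ n * Real.exp (-(b⁻¹ * z))) by
      refine setIntegral_congr_fun measurableSet_Ioi fun x hx => ?_
      unfold laplacePDF
      rw [abs_neg, abs_of_pos hx, neg_pow, neg_div, div_eq_inv_mul]
      ring_nf]
    rw [integral_const_mul, intVal_Ioi (inv_pos.2 hb) n]
  rw [hIoi, hIic, inv_pow, div_inv_eq_mul]
  field_simp
  ring

lemma nat_id (m j : ℕ) (hj : j ≤ m) :
    (m+2)*(m+1)*Nat.choose m j = Nat.choose (m+2) (j+2) * ((j+2)*(j+1)) := by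
  have h1 := Nat.choose_mul_factorial_mul_factorial hj
  have h2 := Nat.choose_mul_factorial_mul_factorial (show j+2 ≤ m+2 by omega)
  have h3 : m+2-(j+2) = m-j := by omega
  rw [h3] at h2
  apply Nat.eq_of_mul_eq_mul_right (Nat.mul_pos (factorial_pos j) (factorial_pos (m-j)))
  calc (m+2)*(m+1)*Nat.choose m j * (j ! * (m-j)!)
      = (m+2)*(m+1)*(Nat.choose m j * j ! * (m-j)!) := by ring
    _ = (m+2)*(m+1)*m ! := by rw [h1]
    _ = (m+2)! := by simp [factorial_succ]; ring
    _ = Nat.choose (m+2) (j+2) * (j+2)! * (m-j)! := h2.symm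
    _ = Nat.choose (m+2) (j+2) * ((j+2)*(j+1)) * (j ! * (m-j)!) := by
        simp [factorial_succ]; ring

/-- For `f(x) = x^k` with `k ≥ 2`, the estimator `g(x) = x^k - b² k (k-1) x^(k-2)`
is unbiased for `q^k` under Laplace(0,b) noise. -/
theorem unbiased_power_laplace (b : ℝ) (hb : 0 < b) (k : ℕ) (hk : 2 ≤ k) (q : ℝ) :
    ∫ z : ℝ, ((q + z) ^ k - b ^ 2 * (k : ℝ) * ((k : ℝ) - 1) * (q + z) ^ (k - 2))
      * laplacePDF b z = q ^ k := by
  obtain ⟨m, rfl⟩ : ∃ m, k = m + 2 := ⟨k - 2, by omega⟩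
  set M : ℕ → ℝ := fun n => ((1 + (-1:ℝ) ^ n) / 2) * (n ! : ℝ) * b ^ n with hMdef
  set c : ℝ := b ^ 2 * ((m+2 : ℕ) : ℝ) * (((m+2 : ℕ) : ℝ) - 1) with hcdef
  have hfun : ∀ z : ℝ,
      ((q + z) ^ (m+2) - c * (q + z) ^ (m + 2 - 2)) * laplacePDF b z
      = (∑ j ∈ Finset.range (m+3),
            (q ^ (m+2-j) * (Nat.choose (m+2) j : ℝ)) * (z ^ j * laplacePDF b z))
        - ∑ j ∈ Finset.range (m+1),
            (c * q ^ (m-j) * (Nat.choose m j : ℝ)) * (z ^ j * laplacePDF b z) := by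
    intro z
    have h1 : (q + z) ^ (m+2)
        = ∑ j ∈ Finset.range (m+3), z ^ j * q ^ (m+2-j) * (Nat.choose (m+2) j : ℝ) := by
      rw [add_comm q z, add_pow]
    have h2 : (q + z) ^ (m + 2 - 2)
        = ∑ j ∈ Finset.range (m+1), z ^ j * q ^ (m-j) * (Nat.choose m j : ℝ) := by
      rw [show m + 2 - 2 = m by omega, add_comm q z, add_pow]
    rw [h1, h2, sub_mul, Finset.sum_mul, Finset.mul_sum, Finset.sum_mul]
    congr 1
    · exact Finset.sum_congr rfl fun j _ => by ring
    · exact Finset.sum_congr rfl fun j _ => by ring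
  simp only [hfun]
  rw [integral_sub
      (integrable_finset_sum _ fun j _ => (lap_integrable hb j).const_mul _)
      (integrable_finset_sum _ fun j _ => (lap_integrable hb j).const_mul _),
    integral_finset_sum _ (fun j _ => (lap_integrable hb j).const_mul _),
    integral_finset_sum _ (fun j _ => (lap_integrable hb j).const_mul _)]
  simp only [integral_const_mul, lap_moment hb]
  -- now pure algebra
  have key : ∀ j ∈ Finset.range (m+1),
      c * q ^ (m-j) * (Nat.choose m j : ℝ) * M j
      = q ^ (m-j) * (Nat.choose (m+2) (j+2) : ℝ) * M (j+2) := by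
    intro j hj
    rw [Finset.mem_range] at hj
    have hid := nat_id m j (by omega)
    have hcast : ((m:ℝ)+2)*((m:ℝ)+1)*(Nat.choose m j : ℝ)
        = (Nat.choose (m+2) (j+2) : ℝ) * (((j:ℝ)+2)*((j:ℝ)+1)) := by
      exact_mod_cast congrArg (Nat.cast : ℕ → ℝ) hid
    simp only [hMdef, hcdef]
    rw [show ((j:ℕ)+2)! = (j+2)*((j+1)*(j !)) from by simp [factorial_succ],
      show (-1:ℝ) ^ (j+2) = (-1:ℝ) ^ j by rw [pow_add]; norm_num]
    push_cast
    linear_combination (q ^ (m-j) * ((1 + (-1:ℝ)^j)/2) * (j ! : ℝ) * b ^ (j+2)) * hcast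
  rw [Finset.sum_congr rfl key]
  have expand : ∑ j ∈ Finset.range (m+3), q ^ (m+2-j) * (Nat.choose (m+2) j : ℝ) * M j
      = (∑ j ∈ Finset.range (m+1),
          q ^ (m-j) * (Nat.choose (m+2) (j+2) : ℝ) * M (j+2))
        + q ^ (m+1) * (Nat.choose (m+2) 1 : ℝ) * M 1
        + q ^ (m+2) * (Nat.choose (m+2) 0 : ℝ) * M 0 := by
    rw [Finset.sum_range_succ' (fun j => q ^ (m+2-j) * (Nat.choose (m+2) j : ℝ) * M j) (m+2),
      Finset.sum_range_succ' (fun j => q ^ (m+2-(j+1)) * (Nat.choose (m+2) (j+1) : ℝ) * M (j+1)) (m+1)]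
    congr 1
    congr 1
    refine Finset.sum_congr rfl fun j hj => ?_
    rw [Finset.mem_range] at hj
    rw [show m+2-(j+1+1) = m-j by omega]
  have hM1 : M 1 = 0 := by simp [hMdef]
  have hM0 : M 0 = 1 := by norm_num [hMdef]
  rw [expand, hM1, hM0, Nat.choose_zero_right]
  push_cast
  ring
end

section
/- Let b > 0, q ∈ ℝ, and Z ~ Laplace(0,b). If f : ℝ → ℝ is twice continuously differentiable, and f, f', f'' all have at most polynomial growth, then E[f(q+Z) − b²·f''(q+Z)] = f(q). -/
/-!
Write `h = f (q + ·)`. On the half-line `z > 0`, the function `-(b h + b² h') e^{-z/b}` is an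
antiderivative of `(h - b² h'') e^{-z/b}`, and polynomial growth makes it vanish at infinity,
so `∫₀^∞ (h - b² h'') e^{-z/b} = b h(0) + b² h'(0)`. The same computation for `f (q - ·)`
handles `z < 0` after `z ↦ -z`, flipping the sign of the `h'(0)` term; the two `b² f'(q)`
terms cancel and the remaining `2 b f(q)` is exactly the normalisation of the density.
-/

open MeasureTheory Real

/-- A function has at most polynomial growth. -/
def PolyGrowth (f : ℝ → ℝ) : Prop :=
  ∃ C n, ∀ x : ℝ, |f x| ≤ C * (1 + |x|) ^ (n : ℕ)

open Filter Set Topology Asymptotics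

namespace PolyGrowth

variable {g h : ℝ → ℝ}

lemma comp_neg (hg : PolyGrowth g) : PolyGrowth (fun x => g (-x)) := by
  obtain ⟨C, n, hC⟩ := hg
  exact ⟨C, n, fun x => by simpa using hC (-x)⟩

lemma neg (hg : PolyGrowth g) : PolyGrowth (fun x => -g x) := by
  obtain ⟨C, n, hC⟩ := hg
  exact ⟨C, n, fun x => by simpa using hC x⟩

lemma const_mul (hg : PolyGrowth g) (c : ℝ) : PolyGrowth (fun x => c * g x) := by
  obtain ⟨C, n, hC⟩ := hg
  refine ⟨|c| * C, n, fun x => ?_⟩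
  rw [abs_mul, mul_assoc]
  exact mul_le_mul_of_nonneg_left (hC x) (abs_nonneg c)

lemma add (hg : PolyGrowth g) (hh : PolyGrowth h) : PolyGrowth (fun x => g x + h x) := by
  obtain ⟨C, n, hC⟩ := hg
  obtain ⟨D, m, hD⟩ := hh
  have hC0 : 0 ≤ C := by simpa using (abs_nonneg _).trans (hC 0)
  have hD0 : 0 ≤ D := by simpa using (abs_nonneg _).trans (hD 0)
  refine ⟨C + D, max n m, fun x => ?_⟩
  have hx : 1 ≤ 1 + |x| := le_add_of_nonneg_right (abs_nonneg x)
  calc |g x + h x| ≤ C * (1 + |x|) ^ n + D * (1 + |x|) ^ m :=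
        (abs_add_le _ _).trans (add_le_add (hC x) (hD x))
    _ ≤ C * (1 + |x|) ^ max n m + D * (1 + |x|) ^ max n m := by
        gcongr
        exacts [le_max_left n m, le_max_right n m]
    _ = (C + D) * (1 + |x|) ^ max n m := by ring

lemma sub (hg : PolyGrowth g) (hh : PolyGrowth h) : PolyGrowth (fun x => g x - h x) := by
  simpa only [sub_eq_add_neg] using hg.add hh.neg

lemma comp_const_add (hg : PolyGrowth g) (a : ℝ) : PolyGrowth (fun x => g (a + x)) := by
  obtain ⟨C, n, hC⟩ := hg
  have hC0 : 0 ≤ C := by simpa using (abs_nonneg _).trans (hC 0)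
  refine ⟨C * (1 + |a|) ^ n, n, fun x => (hC (a + x)).trans ?_⟩
  rw [mul_assoc, ← mul_pow]
  gcongr
  nlinarith [abs_add_le a x, abs_nonneg a, abs_nonneg x, mul_nonneg (abs_nonneg a) (abs_nonneg x)]

lemma comp_const_sub (hg : PolyGrowth g) (a : ℝ) : PolyGrowth (fun x => g (a - x)) := by
  simpa only [sub_eq_add_neg] using (hg.comp_const_add a).comp_neg

lemma isBigO_pow_atTop (hg : PolyGrowth g) : ∃ n : ℕ, g =O[atTop] fun x => x ^ n := by
  obtain ⟨C, n, hC⟩ := hg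
  refine ⟨n, IsBigO.of_bound (C * 2 ^ n) ?_⟩
  filter_upwards [eventually_ge_atTop 1] with x hx
  have hC0 : 0 ≤ C := by simpa using (abs_nonneg _).trans (hC 0)
  calc ‖g x‖ ≤ C * (1 + |x|) ^ n := hC x
    _ ≤ C * (2 * x) ^ n := by gcongr; rw [abs_of_nonneg (by linarith)]; linarith
    _ = C * 2 ^ n * ‖x ^ n‖ := by
      rw [norm_pow, norm_of_nonneg (by linarith), mul_pow, mul_assoc]

lemma isLittleO_exp_mul_atTop (hg : PolyGrowth g) {c : ℝ} (hc : 0 < c) :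
    g =o[atTop] fun x => exp (c * x) := by
  obtain ⟨n, hn⟩ := hg.isBigO_pow_atTop
  exact hn.trans_isLittleO (isLittleO_pow_exp_pos_mul_atTop n hc)

lemma tendsto_mul_exp_neg_div_atTop (hg : PolyGrowth g) {b : ℝ} (hb : 0 < b) :
    Tendsto (fun x => g x * exp (-x / b)) atTop (𝓝 0) := by
  refine (hg.isLittleO_exp_mul_atTop (inv_pos.2 hb)).tendsto_div_nhds_zero.congr fun x => ?_
  rw [div_eq_mul_inv, ← exp_neg, neg_div, div_eq_inv_mul]

lemma integrableOn_mul_exp_neg_div_Ioi (hg : PolyGrowth g) (hgc : Continuous g) {b : ℝ}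
    (hb : 0 < b) : IntegrableOn (fun x => g x * exp (-x / b)) (Ioi 0) := by
  have hc : 0 < (2 * b)⁻¹ := by positivity
  refine integrable_of_isBigO_exp_neg hc (by fun_prop) ?_
  -- `g = o(e^{x/(2b)})`, so `g e^{-x/b} = O(e^{-x/(2b)})`
  refine ((hg.isLittleO_exp_mul_atTop hc).isBigO.mul (isBigO_refl _ _)).congr_right fun x => ?_
  rw [← exp_add]
  congr 1
  field_simp
  ring

end PolyGrowth

lemma integral_eq_integral_Ioi_add_integral_Ioi_comp_neg {E : Type*} [NormedAddCommGroup E]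
    [NormedSpace ℝ E] {F : ℝ → E} (hpos : IntegrableOn F (Ioi 0))
    (hneg : IntegrableOn (fun x => F (-x)) (Ioi 0)) :
    ∫ x, F x = (∫ x in Ioi 0, F x) + ∫ x in Ioi 0, F (-x) := by
  have hIic : IntegrableOn F (Iic 0) := by
    simpa only [neg_neg, neg_Ici, neg_zero] using
      ((integrableOn_Ici_iff_integrableOn_Ioi enorm_ne_top).2 hneg).comp_neg
  rw [integral_comp_neg_Ioi, neg_zero, add_comm,
    intervalIntegral.integral_Iic_add_Ioi hIic hpos]

lemma laplacePDF_neg (b x : ℝ) : laplacePDF b (-x) = laplacePDF b x := by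
  simp [laplacePDF]

lemma laplacePDF_of_nonneg (b : ℝ) {x : ℝ} (hx : 0 ≤ x) :
    laplacePDF b x = (2 * b)⁻¹ * exp (-x / b) := by
  simp [laplacePDF, abs_of_nonneg hx]

lemma integral_mul_laplacePDF {φ : ℝ → ℝ} {b : ℝ}
    (hpos : IntegrableOn (fun x => φ x * exp (-x / b)) (Ioi 0))
    (hneg : IntegrableOn (fun x => φ (-x) * exp (-x / b)) (Ioi 0)) :
    ∫ x, φ x * laplacePDF b x =
      (2 * b)⁻¹ *
        ((∫ x in Ioi 0, φ x * exp (-x / b)) + ∫ x in Ioi 0, φ (-x) * exp (-x / b)) := by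
  have hpdf : ∀ ψ : ℝ → ℝ, EqOn (fun x => ψ x * laplacePDF b x)
      (fun x => (2 * b)⁻¹ * (ψ x * exp (-x / b))) (Ioi 0) := fun ψ x hx => by
    simp only [laplacePDF_of_nonneg b hx.le]
    ring
  have hpdf_neg : EqOn (fun x => φ (-x) * laplacePDF b (-x))
      (fun x => (2 * b)⁻¹ * (φ (-x) * exp (-x / b))) (Ioi 0) := fun x hx => by
    simpa only [laplacePDF_neg] using hpdf (fun x => φ (-x)) hx
  rw [integral_eq_integral_Ioi_add_integral_Ioi_comp_neg
      (IntegrableOn.congr_fun (hpos.const_mul _) (hpdf φ).symm measurableSet_Ioi)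
      (IntegrableOn.congr_fun (hneg.const_mul _) hpdf_neg.symm measurableSet_Ioi),
    setIntegral_congr_fun measurableSet_Ioi (hpdf φ),
    setIntegral_congr_fun measurableSet_Ioi hpdf_neg,
    integral_const_mul, integral_const_mul, ← mul_add]

noncomputable def laplaceEstimator (b : ℝ) (f : ℝ → ℝ) (x : ℝ) : ℝ :=
  f x - b ^ 2 * deriv (deriv f) x

section laplaceEstimator

variable {b : ℝ} {f : ℝ → ℝ}

lemma continuous_laplaceEstimator (hf : ContDiff ℝ 2 f) : Continuous (laplaceEstimator b f) :=
  hf.continuous.sub (continuous_const.mul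
    ((hf.deriv' : ContDiff ℝ 1 (deriv f)).continuous_deriv le_rfl))

lemma polyGrowth_laplaceEstimator (h0 : PolyGrowth f) (h2 : PolyGrowth (deriv (deriv f))) :
    PolyGrowth (laplaceEstimator b f) :=
  h0.sub (h2.const_mul (b ^ 2))

lemma laplaceEstimator_comp_const_add (q x : ℝ) :
    laplaceEstimator b (fun z => f (q + z)) x = laplaceEstimator b f (q + x) := by
  simp only [laplaceEstimator, funext (deriv_comp_const_add f q), deriv_comp_const_add]

lemma laplaceEstimator_comp_const_sub (q x : ℝ) :
    laplaceEstimator b (fun z => f (q - z)) x = laplaceEstimator b f (q - x) := by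
  simp only [laplaceEstimator, funext (deriv_comp_const_sub f q), deriv.fun_neg,
    deriv_comp_const_sub, neg_neg]

theorem integral_Ioi_laplaceEstimator_mul_exp_neg_div (hb : 0 < b) (hf : ContDiff ℝ 2 f)
    (h0 : PolyGrowth f) (h1 : PolyGrowth (deriv f)) (h2 : PolyGrowth (deriv (deriv f))) :
    ∫ x in Ioi 0, laplaceEstimator b f x * exp (-x / b) = b * f 0 + b ^ 2 * deriv f 0 := by
  have hd : Differentiable ℝ f := hf.differentiable (by norm_num)
  have hd' : Differentiable ℝ (deriv f) :=
    (hf.deriv' : ContDiff ℝ 1 (deriv f)).differentiable one_ne_zero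
  set G : ℝ → ℝ := fun x => -(b * f x + b ^ 2 * deriv f x) * exp (-x / b)
  have hG : ∀ x, HasDerivAt G (laplaceEstimator b f x * exp (-x / b)) x := fun x => by
    have hexp : HasDerivAt (fun x => exp (-x / b)) (-b⁻¹ * exp (-x / b)) x := by
      simpa [neg_div, mul_comm] using ((hasDerivAt_id x).neg.div_const b).exp
    refine HasDerivAt.congr_deriv (f := G) ((((hd x).hasDerivAt.const_mul b).add
      ((hd' x).hasDerivAt.const_mul (b ^ 2))).neg.mul hexp) ?_
    simp only [laplaceEstimator, Pi.neg_apply, Pi.add_apply]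
    field_simp
    ring
  have hGtop : Tendsto G atTop (𝓝 0) := by
    have := ((h0.tendsto_mul_exp_neg_div_atTop hb).const_mul b |>.add
      ((h1.tendsto_mul_exp_neg_div_atTop hb).const_mul (b ^ 2))).neg
    rw [mul_zero, mul_zero, add_zero, neg_zero] at this
    exact this.congr fun x => by simp only [G]; ring
  have hint := (polyGrowth_laplaceEstimator (b := b) h0 h2).integrableOn_mul_exp_neg_div_Ioi
    (continuous_laplaceEstimator hf) hb
  rw [integral_Ioi_of_hasDerivAt_of_tendsto' (fun x _ => hG x) hint hGtop]
  simp [G]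

theorem integral_Ioi_laplaceEstimator_const_add_mul_exp_neg_div (hb : 0 < b)
    (hf : ContDiff ℝ 2 f) (h0 : PolyGrowth f) (h1 : PolyGrowth (deriv f))
    (h2 : PolyGrowth (deriv (deriv f))) (q : ℝ) :
    ∫ x in Ioi 0, laplaceEstimator b f (q + x) * exp (-x / b) = b * f q + b ^ 2 * deriv f q := by
  have hd : deriv (fun z => f (q + z)) = fun z => deriv f (q + z) :=
    funext (deriv_comp_const_add f q)
  have hdd : deriv (fun z => deriv f (q + z)) = fun z => deriv (deriv f) (q + z) :=
    funext (deriv_comp_const_add (deriv f) q)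
  simpa only [laplaceEstimator_comp_const_add, hd, add_zero] using
    integral_Ioi_laplaceEstimator_mul_exp_neg_div hb (f := fun z => f (q + z)) (by fun_prop)
      (h0.comp_const_add q) (by simpa only [hd] using h1.comp_const_add q)
      (by simpa only [hd, hdd] using h2.comp_const_add q)

theorem integral_Ioi_laplaceEstimator_const_sub_mul_exp_neg_div (hb : 0 < b)
    (hf : ContDiff ℝ 2 f) (h0 : PolyGrowth f) (h1 : PolyGrowth (deriv f))
    (h2 : PolyGrowth (deriv (deriv f))) (q : ℝ) :
    ∫ x in Ioi 0, laplaceEstimator b f (q - x) * exp (-x / b) = b * f q - b ^ 2 * deriv f q := by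
  have hd : deriv (fun z => f (q - z)) = fun z => -deriv f (q - z) :=
    funext (deriv_comp_const_sub f q)
  have hdd : deriv (fun z => -deriv f (q - z)) = fun z => deriv (deriv f) (q - z) :=
    funext fun z => by simp only [deriv.fun_neg, deriv_comp_const_sub, neg_neg]
  simpa only [laplaceEstimator_comp_const_sub, hd, sub_zero, mul_neg, ← sub_eq_add_neg] using
    integral_Ioi_laplaceEstimator_mul_exp_neg_div hb (f := fun z => f (q - z)) (by fun_prop)
      (h0.comp_const_sub q) (by simpa only [hd] using (h1.comp_const_sub q).neg)
      (by simpa only [hd, hdd] using h2.comp_const_sub q)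

end laplaceEstimator

/-- If `f` is twice continuously differentiable with polynomially growing `f`, `f'`, `f''`,
then `f(q+Z) - b² f''(q+Z)` is an unbiased estimator for `f(q)` under Laplace(0,b) noise. -/
theorem unbiased_estimator_laplace (b : ℝ) (hb : 0 < b) (q : ℝ) (f : ℝ → ℝ)
    (hf : ContDiff ℝ 2 f)
    (hg0 : PolyGrowth f) (hg1 : PolyGrowth (deriv f)) (hg2 : PolyGrowth (deriv (deriv f))) :
    ∫ z : ℝ, (f (q + z) - b ^ 2 * deriv (deriv f) (q + z)) * laplacePDF b z = f q := by
  change ∫ z, laplaceEstimator b f (q + z) * laplacePDF b z = f q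
  have hgrowth := polyGrowth_laplaceEstimator (b := b) hg0 hg2
  have hcont := continuous_laplaceEstimator (b := b) hf
  rw [integral_mul_laplacePDF
    ((hgrowth.comp_const_add q).integrableOn_mul_exp_neg_div_Ioi (by fun_prop) hb)
    (by simpa only [sub_eq_add_neg] using
      (hgrowth.comp_const_sub q).integrableOn_mul_exp_neg_div_Ioi (by fun_prop) hb)]
  simp only [← sub_eq_add_neg]
  rw [integral_Ioi_laplaceEstimator_const_add_mul_exp_neg_div hb hf hg0 hg1 hg2,
    integral_Ioi_laplaceEstimator_const_sub_mul_exp_neg_div hb hf hg0 hg1 hg2]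
  field_simp
  ring
end

section
/- Let b > 0 and Z ~ Laplace(0,b). Suppose g₁, g₂ : ℝ → ℝ are measurable with E[g₁(q+Z)] = E[g₂(q+Z)] for all q ∈ ℝ (all expectations existing and finite). Then g₁ = g₂ Lebesgue-almost everywhere. -/
open MeasureTheory Real Set

/-- Completeness for the Laplace kernel: if the integral of `H` against every
translate of the Laplace kernel vanishes, then `H = 0` a.e. -/
lemma laplace_complete_aux (b : ℝ) (hb : 0 < b) (H : ℝ → ℝ)
    (hI : ∀ q : ℝ, Integrable (fun x => H x * Real.exp (-|x - q| / b)))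
    (h0 : ∀ q : ℝ, ∫ x : ℝ, H x * Real.exp (-|x - q| / b) = 0) :
    H =ᵐ[volume] (fun _ => (0 : ℝ)) := by
  set f₁ : ℝ → ℝ := fun x => H x * Real.exp (x / b) with hf₁def
  set f₂ : ℝ → ℝ := fun x => H x * Real.exp (-(x / b)) with hf₂def
  -- kernel identities
  have hker₁ : ∀ q x : ℝ, x ≤ q →
      Real.exp (-|x - q| / b) = Real.exp (x / b) * Real.exp (-(q / b)) := by
    intro q x hx
    rw [abs_of_nonpos (by linarith), ← Real.exp_add]
    ring_nf
  have hker₂ : ∀ q x : ℝ, q ≤ x →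
      Real.exp (-|x - q| / b) = Real.exp (-(x / b)) * Real.exp (q / b) := by
    intro q x hx
    rw [abs_of_nonneg (by linarith), ← Real.exp_add]
    ring_nf
  -- integrability of f₁ on Iic q, f₂ on Ici q
  have hf₁ : ∀ q : ℝ, IntegrableOn f₁ (Iic q) := by
    intro q
    have h := ((hI q).integrableOn (s := Iic q)).const_mul (Real.exp (q / b))
    refine MeasureTheory.IntegrableOn.congr_fun h (fun x hx => ?_) measurableSet_Iic
    simp only [hker₁ q x hx]
    calc Real.exp (q/b) * (H x * (Real.exp (x/b) * Real.exp (-(q/b))))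
        = H x * Real.exp (x/b) * (Real.exp (q/b) * Real.exp (-(q/b))) := by ring
      _ = f₁ x := by rw [← Real.exp_add, add_neg_cancel, Real.exp_zero, mul_one]
  have hf₂ : ∀ q : ℝ, IntegrableOn f₂ (Ici q) := by
    intro q
    have h := ((hI q).integrableOn (s := Ici q)).const_mul (Real.exp (-(q / b)))
    refine MeasureTheory.IntegrableOn.congr_fun h (fun x hx => ?_) measurableSet_Ici
    simp only [hker₂ q x hx]
    calc Real.exp (-(q/b)) * (H x * (Real.exp (-(x/b)) * Real.exp (q/b)))
        = H x * Real.exp (-(x/b)) * (Real.exp (q/b) * Real.exp (-(q/b))) := by ring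
      _ = f₂ x := by rw [← Real.exp_add, add_neg_cancel, Real.exp_zero, mul_one]
  set F : ℝ → ℝ := fun q => ∫ x in Iic q, f₁ x with hFdef
  set G : ℝ → ℝ := fun q => ∫ x in Ioi q, f₂ x with hGdef
  -- the fundamental relation
  have hrel : ∀ q : ℝ, Real.exp (-(q / b)) * F q + Real.exp (q / b) * G q = 0 := by
    intro q
    have e1 : Real.exp (-(q / b)) * F q = ∫ x in Iic q, H x * Real.exp (-|x - q| / b) := by
      rw [hFdef, ← integral_const_mul]
      refine setIntegral_congr_fun measurableSet_Iic (fun x hx => ?_)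
      simp only [hker₁ q x hx, hf₁def]
      ring
    have e2 : Real.exp (q / b) * G q = ∫ x in Ioi q, H x * Real.exp (-|x - q| / b) := by
      rw [hGdef, ← integral_const_mul]
      refine setIntegral_congr_fun measurableSet_Ioi (fun x hx => ?_)
      simp only [hker₂ q x (le_of_lt hx), hf₂def]
      ring
    rw [e1, e2,
      intervalIntegral.integral_Iic_add_Ioi ((hI q).integrableOn) ((hI q).integrableOn), h0 q]
  have hrel' : ∀ q : ℝ, F q = -(Real.exp (q / b) * Real.exp (q / b)) * G q := by
    intro q
    have h := congrArg (fun t => Real.exp (q / b) * t) (hrel q)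
    simp only [mul_add, ← mul_assoc, mul_zero, ← Real.exp_add, add_neg_cancel,
      neg_add_cancel, Real.exp_zero, one_mul] at h
    rw [Real.exp_add] at h
    linear_combination h
  -- increments
  have hF_inc : ∀ q r : ℝ, q ≤ r → F r = F q + ∫ x in Ioc q r, f₁ x := by
    intro q r hqr
    rw [hFdef]
    simp only
    rw [← Iic_union_Ioc_eq_Iic hqr,
      setIntegral_union (Iic_disjoint_Ioc le_rfl) measurableSet_Ioc (hf₁ q)
        ((hf₁ r).mono_set Ioc_subset_Iic_self)]
  have hG_inc : ∀ q r : ℝ, q ≤ r → G q = (∫ x in Ioc q r, f₂ x) + G r := by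
    intro q r hqr
    rw [hGdef]
    simp only
    rw [← Ioc_union_Ioi_eq_Ioi hqr,
      setIntegral_union (Ioc_disjoint_Ioi le_rfl) measurableSet_Ioi
        ((hf₂ q).mono_set (fun x hx => le_of_lt hx.1))
        ((hf₂ r).mono_set Ioi_subset_Ici_self)]
  -- key estimate: |G q| ≤ ∫_{Ioc q r} |f₂| for r > q
  have hest : ∀ q r : ℝ, q < r → |G q| ≤ ∫ x in Ioc q r, |f₂ x| := by
    intro q r hqr
    set Eq2 : ℝ := Real.exp (q / b) * Real.exp (q / b) with hEq2
    set Er2 : ℝ := Real.exp (r / b) * Real.exp (r / b) with hEr2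
    have hlt : Eq2 < Er2 := by
      have h1 : Real.exp (q / b) < Real.exp (r / b) :=
        Real.exp_lt_exp.2 (by exact div_lt_div_of_pos_right hqr hb)
      have h2 := Real.exp_pos (q / b)
      nlinarith
    have hIf₁ : IntegrableOn f₁ (Ioc q r) := (hf₁ r).mono_set Ioc_subset_Iic_self
    have hIf₂ : IntegrableOn f₂ (Ioc q r) := (hf₂ q).mono_set (fun x hx => le_of_lt hx.1)
    -- algebraic identity
    have key : (Er2 - Eq2) * G q = ∫ x in Ioc q r, (Er2 * f₂ x - f₁ x) := by
      have h1 := hrel' q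
      have h2 := hrel' r
      have h3 := hF_inc q r (le_of_lt hqr)
      have h4 := hG_inc q r (le_of_lt hqr)
      rw [integral_sub (hIf₂.const_mul Er2) hIf₁, integral_const_mul]
      have h5 : G r = G q - ∫ x in Ioc q r, f₂ x := by linarith
      rw [h5] at h2
      rw [← hEq2] at h1
      rw [← hEr2] at h2
      linear_combination -h1 + h2 - h3
    have hbound : |(Er2 - Eq2) * G q| ≤ (Er2 - Eq2) * ∫ x in Ioc q r, |f₂ x| := by
      rw [key]
      calc |∫ x in Ioc q r, (Er2 * f₂ x - f₁ x)|
          ≤ ∫ x in Ioc q r, |Er2 * f₂ x - f₁ x| := by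
            simpa [Real.norm_eq_abs] using
              norm_integral_le_integral_norm (μ := volume.restrict (Ioc q r))
                (fun x => Er2 * f₂ x - f₁ x)
        _ ≤ ∫ x in Ioc q r, (Er2 - Eq2) * |f₂ x| := by
            refine setIntegral_mono_on ((hIf₂.const_mul Er2).sub hIf₁).abs
              (hIf₂.abs.const_mul _) measurableSet_Ioc (fun x hx => ?_)
            have hx1 : q < x := hx.1
            have hx2 : x ≤ r := hx.2
            have hfx : Er2 * f₂ x - f₁ x
                = (Er2 - Real.exp (x / b) * Real.exp (x / b)) * f₂ x := by
              simp only [hf₁def, hf₂def]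
              have : Real.exp (x / b) * Real.exp (x / b) * (H x * Real.exp (-(x / b)))
                  = H x * Real.exp (x / b) := by
                calc Real.exp (x/b) * Real.exp (x/b) * (H x * Real.exp (-(x/b)))
                    = H x * Real.exp (x/b) * (Real.exp (x/b) * Real.exp (-(x/b))) := by ring
                  _ = H x * Real.exp (x/b) := by
                      rw [← Real.exp_add, add_neg_cancel, Real.exp_zero, mul_one]
              rw [sub_mul, this]
            rw [hfx, abs_mul]
            have hEx : Eq2 ≤ Real.exp (x / b) * Real.exp (x / b) := by
              have h1 : Real.exp (q / b) ≤ Real.exp (x / b) :=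
                Real.exp_le_exp.2 (by exact div_le_div_of_nonneg_right (le_of_lt hx1) hb.le)
              have h2 := Real.exp_pos (q / b)
              nlinarith
            have hEx2 : Real.exp (x / b) * Real.exp (x / b) ≤ Er2 := by
              have h1 : Real.exp (x / b) ≤ Real.exp (r / b) :=
                Real.exp_le_exp.2 (by exact div_le_div_of_nonneg_right hx2 hb.le)
              have h2 := Real.exp_pos (x / b)
              nlinarith
            have : |Er2 - Real.exp (x / b) * Real.exp (x / b)|
                = Er2 - Real.exp (x / b) * Real.exp (x / b) :=
              abs_of_nonneg (by linarith)
            rw [this]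
            have habs : (0:ℝ) ≤ |f₂ x| := abs_nonneg _
            nlinarith
        _ = (Er2 - Eq2) * ∫ x in Ioc q r, |f₂ x| := integral_const_mul _ _
    rw [abs_mul, abs_of_pos (by linarith : (0:ℝ) < Er2 - Eq2)] at hbound
    exact le_of_mul_le_mul_left hbound (by linarith)
  -- conclude G ≡ 0
  have hG0 : ∀ q : ℝ, G q = 0 := by
    intro q
    have hii : ∀ a c : ℝ, IntervalIntegrable (fun x => |f₂ x|) volume a c := by
      intro a c
      rw [intervalIntegrable_iff]
      exact ((hf₂ (min a c)).mono_set
        (fun x hx => le_of_lt hx.1)).abs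
    have hcont : Continuous (fun r => ∫ x in q..r, |f₂ x|) :=
      intervalIntegral.continuous_primitive hii q
    have h0' : (∫ x in q..q, |f₂ x|) = 0 := intervalIntegral.integral_same
    have htend : Filter.Tendsto (fun r => ∫ x in q..r, |f₂ x|) (nhdsWithin q (Ioi q))
        (nhds 0) := by
      have := hcont.tendsto q
      rw [h0'] at this
      exact this.mono_left nhdsWithin_le_nhds
    have hev : ∀ᶠ r in nhdsWithin q (Ioi q), |G q| ≤ ∫ x in q..r, |f₂ x| := by
      filter_upwards [self_mem_nhdsWithin] with r hr
      rw [intervalIntegral.integral_of_le (le_of_lt hr)]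
      exact hest q r hr
    have : |G q| ≤ 0 := ge_of_tendsto htend hev
    exact abs_eq_zero.mp (le_antisymm this (abs_nonneg _))
  have hF0 : ∀ q : ℝ, F q = 0 := by
    intro q
    rw [hrel' q, hG0 q, mul_zero]
  -- integrals of f₁ over Ioc vanish
  have hIoc₁ : ∀ q r : ℝ, q ≤ r → ∫ x in Ioc q r, f₁ x = 0 := by
    intro q r hqr
    have := hF_inc q r hqr
    rw [hF0 q, hF0 r, zero_add] at this
    exact this.symm
  -- measurability of H (a.e.)
  have hHm : AEMeasurable H := by
    have h1 := (hI 0).aemeasurable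
    have h2 : AEMeasurable (fun x : ℝ =>
        (H x * Real.exp (-|x - 0| / b)) * Real.exp (|x - 0| / b)) :=
      h1.mul ((Real.measurable_exp.comp
        ((measurable_abs.comp (measurable_id.sub measurable_const)).div_const b)).aemeasurable)
    refine h2.congr (Filter.Eventually.of_forall (fun x => ?_))
    have : Real.exp (-|x - 0| / b) * Real.exp (|x - 0| / b) = 1 := by
      rw [← Real.exp_add]
      rw [show -|x - 0| / b + |x - 0| / b = 0 by ring, Real.exp_zero]
    calc H x * Real.exp (-|x - 0| / b) * Real.exp (|x - 0| / b)
        = H x * (Real.exp (-|x - 0| / b) * Real.exp (|x - 0| / b)) := by ring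
      _ = H x := by rw [this, mul_one]
  have hf₁m : AEMeasurable f₁ :=
    hHm.mul (Real.measurable_exp.comp (measurable_id.div_const b)).aemeasurable
  -- the two densities
  set dp : ℝ → ENNReal := fun x => ENNReal.ofReal (f₁ x) with hdp
  set dm : ℝ → ENNReal := fun x => ENNReal.ofReal (-f₁ x) with hdm
  have hdpm : AEMeasurable dp := ENNReal.measurable_ofReal.comp_aemeasurable hf₁m
  have hdmm : AEMeasurable dm := ENNReal.measurable_ofReal.comp_aemeasurable hf₁m.neg
  set μp : Measure ℝ := volume.withDensity dp with hμp
  set μm : Measure ℝ := volume.withDensity dm with hμm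
  -- they agree on Ioc intervals
  have hIocIntegrable : ∀ q r : ℝ, IntegrableOn f₁ (Ioc q r) := by
    intro q r
    exact (hf₁ r).mono_set Ioc_subset_Iic_self
  have happ : ∀ q r : ℝ, q < r →
      μp (Ioc q r) = ENNReal.ofReal (∫ x in Ioc q r, max (f₁ x) 0) ∧
      μm (Ioc q r) = ENNReal.ofReal (∫ x in Ioc q r, max (-f₁ x) 0) := by
    intro q r hqr
    constructor
    · rw [hμp, withDensity_apply _ measurableSet_Ioc]
      rw [ofReal_integral_eq_lintegral_ofReal (hIocIntegrable q r).pos_part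
        (Filter.Eventually.of_forall (fun x => le_max_right _ _))]
      refine lintegral_congr (fun x => ?_)
      rcases le_total (f₁ x) 0 with h | h
      · rw [hdp]
        simp only [max_eq_right h, ENNReal.ofReal_zero, ENNReal.ofReal_eq_zero]
        exact h
      · rw [hdp, max_eq_left h]
    · rw [hμm, withDensity_apply _ measurableSet_Ioc]
      rw [ofReal_integral_eq_lintegral_ofReal (hIocIntegrable q r).neg_part
        (Filter.Eventually.of_forall (fun x => le_max_right _ _))]
      refine lintegral_congr (fun x => ?_)
      rcases le_total (-f₁ x) 0 with h | h
      · rw [hdm]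
        simp only [max_eq_right h, ENNReal.ofReal_zero, ENNReal.ofReal_eq_zero]
        exact h
      · rw [hdm, max_eq_left h]
  have hagree : ∀ ⦃q r : ℝ⦄, q < r → μp (Ioc q r) = μm (Ioc q r) := by
    intro q r hqr
    obtain ⟨h1, h2⟩ := happ q r hqr
    rw [h1, h2]
    congr 1
    have hsub : (∫ x in Ioc q r, max (f₁ x) 0) - (∫ x in Ioc q r, max (-f₁ x) 0)
        = ∫ x in Ioc q r, f₁ x := by
      rw [← integral_sub (hIocIntegrable q r).pos_part (hIocIntegrable q r).neg_part]
      refine setIntegral_congr_fun measurableSet_Ioc (fun x _ => ?_)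
      exact max_zero_sub_max_neg_zero_eq_self (f₁ x)
    rw [hIoc₁ q r (le_of_lt hqr)] at hsub
    linarith
  have hfin : ∀ ⦃q r : ℝ⦄, q < r → μp (Ioc q r) ≠ ⊤ := by
    intro q r hqr
    rw [(happ q r hqr).1]
    exact ENNReal.ofReal_ne_top
  have hμeq : μp = μm := MeasureTheory.Measure.ext_of_Ioc' μp μm hfin hagree
  have hdeq : dp =ᵐ[volume] dm := by
    rw [← withDensity_eq_iff_of_sigmaFinite hdpm hdmm]
    exact hμeq
  -- conclude f₁ = 0 a.e., hence H = 0 a.e.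
  have hf₁0 : ∀ᵐ x ∂(volume : Measure ℝ), f₁ x = 0 := by
    filter_upwards [hdeq] with x hx
    simp only [hdp, hdm] at hx
    by_contra hne
    rcases lt_or_gt_of_ne hne with h | h
    · have h1 : ENNReal.ofReal (f₁ x) = 0 := by
        simp [ENNReal.ofReal_eq_zero, le_of_lt h]
      have h2 : ENNReal.ofReal (-f₁ x) ≠ 0 := by
        simp only [ne_eq, ENNReal.ofReal_eq_zero, not_le]
        linarith
      exact h2 (by rw [← hx]; exact h1)
    · have h1 : ENNReal.ofReal (-f₁ x) = 0 := by
        simp [ENNReal.ofReal_eq_zero, le_of_lt h]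
      have h2 : ENNReal.ofReal (f₁ x) ≠ 0 := by
        simp only [ne_eq, ENNReal.ofReal_eq_zero, not_le]
        linarith
      exact h2 (by rw [hx]; exact h1)
  filter_upwards [hf₁0] with x hx
  have hexp : Real.exp (x / b) ≠ 0 := Real.exp_ne_zero _
  have : H x * Real.exp (x / b) = 0 := hx
  exact (mul_eq_zero.mp this).resolve_right hexp

/-- Completeness of the Laplace location family: unbiased estimators under
Laplace(0,b) noise are unique up to Lebesgue-null sets. -/
theorem laplace_unbiased_unique (b : ℝ) (hb : 0 < b) (g₁ g₂ : ℝ → ℝ)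
    (hm₁ : Measurable g₁) (hm₂ : Measurable g₂)
    (hint₁ : ∀ q : ℝ, Integrable (fun z : ℝ => g₁ (q + z) * laplacePDF b z))
    (hint₂ : ∀ q : ℝ, Integrable (fun z : ℝ => g₂ (q + z) * laplacePDF b z))
    (heq : ∀ q : ℝ, ∫ z : ℝ, g₁ (q + z) * laplacePDF b z
      = ∫ z : ℝ, g₂ (q + z) * laplacePDF b z) :
    g₁ =ᵐ[MeasureTheory.volume] g₂ := by
  have hb' : (2 : ℝ) * b ≠ 0 := by positivity
  -- translate the hypotheses
  have key : ∀ (g : ℝ → ℝ),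
      (∀ q : ℝ, Integrable (fun z : ℝ => g (q + z) * laplacePDF b z)) →
      ∀ q : ℝ, Integrable (fun x : ℝ => g x * laplacePDF b (x - q)) ∧
        (∫ x : ℝ, g x * laplacePDF b (x - q)) = ∫ z : ℝ, g (q + z) * laplacePDF b z := by
    intro g hint q
    set ψ : ℝ → ℝ := fun x => g x * laplacePDF b (x - q) with hψ
    have h1 : (fun z : ℝ => ψ (z + q)) = fun z : ℝ => g (q + z) * laplacePDF b z := by
      funext z
      simp [hψ, add_sub_cancel_right, add_comm]
    have hInt : Integrable (fun z : ℝ => ψ (z + q)) := by rw [h1]; exact hint q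
    constructor
    · have := hInt.comp_add_right (-q)
      simpa using this
    · rw [← MeasureTheory.integral_add_right_eq_self ψ q, h1]
  have hI₁ := fun q => (key g₁ hint₁ q).1
  have hE₁ := fun q => (key g₁ hint₁ q).2
  have hI₂ := fun q => (key g₂ hint₂ q).1
  have hE₂ := fun q => (key g₂ hint₂ q).2
  set H : ℝ → ℝ := fun x => g₁ x - g₂ x with hH
  have hpdf : ∀ x q : ℝ, H x * Real.exp (-|x - q| / b)
      = (2 * b) * ((g₁ x - g₂ x) * laplacePDF b (x - q)) := by
    intro x q
    rw [laplacePDF, hH]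
    field_simp
  have hIH : ∀ q : ℝ, Integrable (fun x => H x * Real.exp (-|x - q| / b)) := by
    intro q
    have h := ((hI₁ q).sub (hI₂ q)).const_mul (2 * b)
    refine h.congr (Filter.Eventually.of_forall (fun x => ?_))
    simp only [Pi.sub_apply, hpdf x q]
    ring
  have h0H : ∀ q : ℝ, (∫ x : ℝ, H x * Real.exp (-|x - q| / b)) = 0 := by
    intro q
    have : (∫ x : ℝ, H x * Real.exp (-|x - q| / b))
        = (2 * b) * ∫ x : ℝ, (g₁ x * laplacePDF b (x - q) - g₂ x * laplacePDF b (x - q)) := by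
      rw [← integral_const_mul]
      refine integral_congr_ae (Filter.Eventually.of_forall (fun x => ?_))
      simp only [hpdf x q]
      ring
    rw [this, integral_sub (hI₁ q) (hI₂ q), hE₁ q, hE₂ q, heq q, sub_self, mul_zero]
  have := laplace_complete_aux b hb H hIH h0H
  filter_upwards [this] with x hx
  have : g₁ x - g₂ x = 0 := hx
  linarith
end

section
/- Let b > 0 and Z ~ Laplace(0,b). For any u, the estimator (1 + b²u²)·cos(u·(q+Z)) is unbiased for cos(u·q): E[(1 + b²u²)·cos(u·(q+Z))] = cos(u·q) for all q ∈ ℝ. -/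
open MeasureTheory Real Set Filter

lemma key_integral (b u c : ℝ) (hb : 0 < b) :
    ∫ z in Set.Ioi (0:ℝ), Real.exp (-(z/b)) * Real.cos (c + u*z)
      = (Real.cos c / b - u * Real.sin c) / (1/b^2 + u^2) := by
  have hD : (0:ℝ) < 1/b^2 + u^2 := by positivity
  set D : ℝ := 1/b^2 + u^2 with hDdef
  set F : ℝ → ℝ := fun x => Real.exp (-(x/b)) *
    (-(1/b) * Real.cos (c + u*x) + u * Real.sin (c + u*x)) / D with hF
  have hlin : ∀ x : ℝ, HasDerivAt (fun x : ℝ => c + u*x) u x := by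
    intro x
    exact ((hasDerivAt_const x c).add ((hasDerivAt_id x).const_mul u)).congr_deriv (by ring)
  have hE : ∀ x : ℝ, HasDerivAt (fun x : ℝ => Real.exp (-(x/b)))
      (Real.exp (-(x/b)) * (-(1/b))) x := by
    intro x
    have h1 : HasDerivAt (fun x : ℝ => -(x/b)) (-(1/b)) x := by
      exact ((hasDerivAt_id x).div_const b).neg
    exact h1.exp
  have hderiv : ∀ x ∈ Set.Ici (0:ℝ),
      HasDerivAt F (Real.exp (-(x/b)) * Real.cos (c + u*x)) x := by
    intro x _
    have hcos : HasDerivAt (fun x : ℝ => Real.cos (c + u*x))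
        (-Real.sin (c + u*x) * u) x := (hlin x).cos
    have hsin : HasDerivAt (fun x : ℝ => Real.sin (c + u*x))
        (Real.cos (c + u*x) * u) x := (hlin x).sin
    have hG : HasDerivAt (fun x : ℝ => -(1/b) * Real.cos (c + u*x) + u * Real.sin (c + u*x))
        (-(1/b) * (-Real.sin (c + u*x) * u) + u * (Real.cos (c + u*x) * u)) x :=
      (hcos.const_mul _).add (hsin.const_mul u)
    have h := ((hE x).mul hG).div_const D
    refine h.congr_deriv ?_
    rw [hDdef]
    field_simp
    ring
  have hint : IntegrableOn (fun x : ℝ => Real.exp (-(x/b)) * Real.cos (c + u*x))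
      (Set.Ioi (0:ℝ)) := by
    refine (exp_neg_integrableOn_Ioi 0 (by positivity : (0:ℝ) < 1/b)).mono'
      (Continuous.aestronglyMeasurable (by fun_prop)) ?_
    filter_upwards with x
    rw [norm_mul, Real.norm_eq_abs, Real.norm_eq_abs, Real.abs_exp]
    calc Real.exp (-(x/b)) * |Real.cos (c + u*x)| ≤ Real.exp (-(x/b)) * 1 :=
          mul_le_mul_of_nonneg_left (Real.abs_cos_le_one _) (Real.exp_pos _).le
      _ = Real.exp (-(1/b) * x) := by rw [mul_one]; congr 1; ring
  have htend : Tendsto F atTop (nhds 0) := by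
    apply squeeze_zero_norm (a := fun x => Real.exp (-(x/b)) * ((1/b + |u|)/D))
    · intro x
      have hGb : |(-(1/b) * Real.cos (c + u*x) + u * Real.sin (c + u*x))| ≤ 1/b + |u| := by
        calc |(-(1/b) * Real.cos (c + u*x) + u * Real.sin (c + u*x))|
            ≤ |(-(1/b)) * Real.cos (c + u*x)| + |u * Real.sin (c + u*x)| := abs_add_le _ _
          _ ≤ 1/b * 1 + |u| * 1 := by
              rw [abs_mul, abs_mul, abs_neg, abs_of_pos (by positivity : (0:ℝ) < 1/b)]
              gcongr
              · exact Real.abs_cos_le_one _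
              · exact Real.abs_sin_le_one _
          _ = 1/b + |u| := by ring
      calc ‖F x‖ = Real.exp (-(x/b)) *
            |(-(1/b) * Real.cos (c + u*x) + u * Real.sin (c + u*x))| / D := by
            rw [hF, Real.norm_eq_abs, abs_div, abs_mul, Real.abs_exp, abs_of_pos hD]
        _ ≤ Real.exp (-(x/b)) * (1/b + |u|) / D := by gcongr
        _ = Real.exp (-(x/b)) * ((1/b + |u|)/D) := by ring
    · rw [show (0:ℝ) = 0 * ((1/b + |u|)/D) by ring]
      refine Tendsto.mul_const _ ?_
      refine Real.tendsto_exp_atBot.comp ?_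
      apply tendsto_neg_atBot_iff.mpr
      exact Tendsto.atTop_div_const hb tendsto_id
  have hres := integral_Ioi_of_hasDerivAt_of_tendsto' hderiv hint htend
  rw [hres, hF]
  simp only [zero_div, mul_zero, neg_zero, Real.exp_zero, one_mul, mul_zero, add_zero]
  rw [hDdef]
  field_simp
  ring

lemma ioi_integrable (b u c : ℝ) (hb : 0 < b) :
    IntegrableOn (fun z : ℝ => Real.exp (-|z|/b) * Real.cos (c + u*z)) (Set.Ioi (0:ℝ)) := by
  refine (exp_neg_integrableOn_Ioi 0 (by positivity : (0:ℝ) < 1/b)).mono'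
    (Continuous.aestronglyMeasurable (by fun_prop)) ?_
  filter_upwards [ae_restrict_mem measurableSet_Ioi] with x hx
  rw [norm_mul, Real.norm_eq_abs, Real.norm_eq_abs, Real.abs_exp,
    abs_of_pos (show (0:ℝ) < x from hx)]
  calc Real.exp (-x/b) * |Real.cos (c + u*x)| ≤ Real.exp (-x/b) * 1 :=
        mul_le_mul_of_nonneg_left (Real.abs_cos_le_one _) (Real.exp_pos _).le
    _ = Real.exp (-(1/b) * x) := by rw [mul_one]; congr 1; ring

lemma full_integral (b u c : ℝ) (hb : 0 < b) :
    ∫ z : ℝ, Real.exp (-|z|/b) * Real.cos (c + u*z)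
      = 2 * b * Real.cos c / (1 + b^2 * u^2) := by
  have hIoi := ioi_integrable b u c hb
  have hIoi' := ioi_integrable b (-u) c hb
  have hIic : IntegrableOn (fun z : ℝ => Real.exp (-|z|/b) * Real.cos (c + u*z))
      (Set.Iic (0:ℝ)) := by
    rw [← Measure.map_neg_eq_self (volume : Measure ℝ)]
    have m : MeasurableEmbedding fun x : ℝ => -x :=
      (Homeomorph.neg ℝ).measurableEmbedding
    rw [m.integrableOn_map_iff]
    simp_rw [Function.comp_def, neg_preimage, neg_Iic, neg_zero, abs_neg]
    rw [integrableOn_Ici_iff_integrableOn_Ioi]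
    refine hIoi'.congr_fun (fun x _ => ?_) measurableSet_Ioi
    ring_nf
  have hsplit := intervalIntegral.integral_Iic_add_Ioi hIic hIoi
  have hIicEq : ∫ z in Set.Iic (0:ℝ), Real.exp (-|z|/b) * Real.cos (c + u*z)
      = (Real.cos c / b - (-u) * Real.sin c) / (1/b^2 + (-u)^2) := by
    rw [show Set.Iic (0:ℝ) = Set.Iic (-(0:ℝ)) by norm_num,
      ← integral_comp_neg_Ioi, ← key_integral b (-u) c hb]
    refine setIntegral_congr_fun measurableSet_Ioi (fun x hx => ?_)
    rw [abs_neg, abs_of_pos (show (0:ℝ) < x from hx)]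
    ring_nf
  have hIoiEq : ∫ z in Set.Ioi (0:ℝ), Real.exp (-|z|/b) * Real.cos (c + u*z)
      = (Real.cos c / b - u * Real.sin c) / (1/b^2 + u^2) := by
    rw [← key_integral b u c hb]
    refine setIntegral_congr_fun measurableSet_Ioi (fun x hx => ?_)
    rw [abs_of_pos (show (0:ℝ) < x from hx)]
    ring_nf
  rw [← hsplit, hIicEq, hIoiEq]
  have hb2 : b^2 ≠ 0 := by positivity
  have hden : 1/b^2 + u^2 ≠ 0 := by positivity
  have hden2 : 1 + b^2*u^2 ≠ 0 := by positivity
  field_simp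
  ring

/-- The estimator `(1 + b²u²)·cos(u·(q+Z))` is unbiased for `cos(u·q)`
under Laplace(0,b) noise. -/
theorem unbiased_cos_laplace (b : ℝ) (hb : 0 < b) (u : ℝ) (q : ℝ) :
    ∫ z : ℝ, (1 + b ^ 2 * u ^ 2) * Real.cos (u * (q + z)) * laplacePDF b z
      = Real.cos (u * q) := by
  have h1 : ∀ z : ℝ, (1 + b ^ 2 * u ^ 2) * Real.cos (u * (q + z)) * laplacePDF b z
      = ((1 + b ^ 2 * u ^ 2) * (1/(2*b))) * (Real.exp (-|z|/b) * Real.cos (u*q + u*z)) := by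
    intro z
    rw [laplacePDF, mul_add]
    ring
  simp_rw [h1]
  rw [integral_const_mul, full_integral b u (u*q) hb]
  have hden : 1 + b^2*u^2 ≠ 0 := by positivity
  field_simp
end

section
/- Let b > 0 and Z ~ Laplace(0,b), and let g be the unbiased estimator of 1/q described above (using a polynomial extension below L = 1). Then for each q ≥ 1 and each k ∈ ℕ, E[|g(q+Z)|^k] < ∞, whereas E[|1/(q+Z)|] = ∞. -/
open MeasureTheory Real

/-- The extended function `f̃` (equal to `1/x` on `[1,∞)`, quadratic below 1). -/
noncomputable def fTilde (x : ℝ) : ℝ :=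
  if 1 ≤ x then 1 / x else 1 - (x - 1) + (x - 1) ^ 2

/-- Second derivative of `f̃`. -/
noncomputable def fTilde'' (x : ℝ) : ℝ := if 1 ≤ x then 2 / x ^ 3 else 2

/-- The unbiased estimator `g` of `1/q` (via the polynomial extension below `L = 1`). -/
noncomputable def invEstimator (b x : ℝ) : ℝ := fTilde x - b ^ 2 * fTilde'' x

/-!
The estimator `g` is built from `f̃`, which equals `1/x` on `[1, ∞)` and is a quadratic below,
so `|g x| ≤ C (1 + |x|)²`; every power of a function of polynomial growth is integrable against
the Laplace density, whose exponential tail beats any polynomial. The plug-in `1/(q + z)` has a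
pole at `z = -q`, where the Laplace density is positive, so near the pole the integrand is
comparable to `(z + q)⁻¹`, whose integral diverges logarithmically.
-/

open Filter Topology Asymptotics

lemma integrable_exp_neg_mul_abs {c : ℝ} (hc : 0 < c) :
    Integrable fun x : ℝ => exp (-(c * |x|)) := by
  rw [← integrableOn_univ, ← Set.Iic_union_Ioi (a := (0 : ℝ)), integrableOn_union]
  constructor
  · refine (integrableOn_exp_mul_Iic hc 0).congr_fun (fun x hx => ?_) measurableSet_Iic
    rw [abs_of_nonpos hx, mul_neg, neg_neg]
  · refine (integrableOn_exp_mul_Ioi (neg_neg_of_pos hc) 0).congr_fun (fun x hx => ?_)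
      measurableSet_Ioi
    simp only [abs_of_pos (Set.mem_Ioi.1 hx), neg_mul]

lemma tendsto_one_add_abs_pow_mul_exp_neg_mul_abs (n : ℕ) {c : ℝ} (hc : 0 < c) :
    Tendsto (fun x : ℝ => (1 + |x|) ^ n * exp (-(c * |x|))) (cocompact ℝ) (𝓝 0) := by
  have hpow : Tendsto (fun t : ℝ => t ^ n * exp (-t)) atTop (𝓝 0) :=
    tendsto_pow_mul_exp_neg_atTop_nhds_zero n
  have hlin : Tendsto (fun x : ℝ => c * (1 + |x|)) (cocompact ℝ) atTop :=
    (tendsto_atTop_add_const_left _ 1 tendsto_norm_cocompact_atTop).const_mul_atTop hc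
  have := (hpow.comp hlin).const_mul (exp c / c ^ n)
  rw [mul_zero] at this
  refine this.congr fun x => ?_
  simp only [Function.comp_apply, mul_pow]
  rw [mul_add, mul_one, neg_add, exp_add, exp_neg]
  field_simp

lemma continuous_laplacePDF (b : ℝ) : Continuous (laplacePDF b) := by
  unfold laplacePDF
  fun_prop

lemma laplacePDF_pos {b : ℝ} (hb : 0 < b) (x : ℝ) : 0 < laplacePDF b x := by
  unfold laplacePDF
  positivity

lemma laplacePDF_eq_mul_exp_neg_mul_abs (b x : ℝ) :
    laplacePDF b x = 1 / (2 * b) * exp (-(1 / (2 * b) * |x|)) * exp (-(1 / (2 * b) * |x|)) := by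
  rw [laplacePDF, mul_assoc, ← exp_add]
  ring_nf

lemma integrable_one_add_abs_pow_mul_laplacePDF {b : ℝ} (hb : 0 < b) (n : ℕ) :
    Integrable fun x : ℝ => (1 + |x|) ^ n * laplacePDF b x := by
  set c := 1 / (2 * b)
  have hc : 0 < c := by positivity
  have hO : (fun x : ℝ => (1 + |x|) ^ n * laplacePDF b x) =O[cocompact ℝ]
      fun x => exp (-(c * |x|)) := by
    have hdecay := (tendsto_one_add_abs_pow_mul_exp_neg_mul_abs n hc).isBigO_one ℝ
    refine ((hdecay.const_mul_left c).mul (isBigO_refl _ _)).congr (fun x => ?_)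
      (fun x => one_mul _)
    rw [laplacePDF_eq_mul_exp_neg_mul_abs]
    ring
  have hcont : Continuous fun x : ℝ => (1 + |x|) ^ n * laplacePDF b x :=
    ((continuous_const.add continuous_abs).pow n).mul (continuous_laplacePDF b)
  exact hcont.locallyIntegrable.integrable_of_isBigO_cocompact hO
    ((integrable_exp_neg_mul_abs hc).integrableAtFilter _)

lemma integrable_mul_laplacePDF_of_abs_le {b C : ℝ} {n : ℕ} {f : ℝ → ℝ} (hb : 0 < b)
    (hf : AEStronglyMeasurable f) (hfC : ∀ x, |f x| ≤ C * (1 + |x|) ^ n) :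
    Integrable fun x => f x * laplacePDF b x := by
  refine ((integrable_one_add_abs_pow_mul_laplacePDF hb n).const_mul C).mono
    (hf.mul (continuous_laplacePDF b).aestronglyMeasurable) (ae_of_all _ fun x => ?_)
  rw [norm_mul, norm_of_nonneg (laplacePDF_pos hb x).le, norm_eq_abs, ← mul_assoc]
  exact (mul_le_mul_of_nonneg_right (hfC x) (laplacePDF_pos hb x).le).trans (le_norm_self _)

lemma measurable_invEstimator (b : ℝ) : Measurable (invEstimator b) := by
  unfold invEstimator fTilde fTilde''
  exact (Measurable.ite measurableSet_Ici (by fun_prop) (by fun_prop)).sub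
    ((Measurable.ite measurableSet_Ici (by fun_prop) (by fun_prop)).const_mul _)

lemma abs_fTilde_le (x : ℝ) : |fTilde x| ≤ 3 * (1 + |x|) ^ 2 := by
  unfold fTilde
  split_ifs with hx
  · rw [abs_of_pos (by positivity), div_le_iff₀ (by positivity)]
    nlinarith [abs_nonneg x]
  · rw [abs_of_pos (by nlinarith)]
    nlinarith [abs_nonneg x, neg_abs_le x]

lemma abs_fTilde''_le (x : ℝ) : |fTilde'' x| ≤ 2 := by
  unfold fTilde''
  split_ifs with hx
  · rw [abs_of_pos (by positivity)]
    exact div_le_self zero_le_two (one_le_pow₀ hx)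
  · norm_num

lemma abs_invEstimator_le (b x : ℝ) :
    |invEstimator b x| ≤ (3 + 2 * b ^ 2) * (1 + |x|) ^ 2 :=
  calc |invEstimator b x| ≤ |fTilde x| + b ^ 2 * |fTilde'' x| := by
        rw [invEstimator, ← abs_of_nonneg (sq_nonneg b), ← abs_mul, abs_of_nonneg (sq_nonneg b)]
        exact abs_sub _ _
    _ ≤ 3 * (1 + |x|) ^ 2 + b ^ 2 * 2 := by
        gcongr
        · exact abs_fTilde_le x
        · exact abs_fTilde''_le x
    _ ≤ (3 + 2 * b ^ 2) * (1 + |x|) ^ 2 := by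
        nlinarith [sq_nonneg b, one_le_pow₀ (n := 2) (le_add_of_nonneg_right (abs_nonneg x))]

lemma one_add_abs_add_le (q z : ℝ) : 1 + |q + z| ≤ (1 + |q|) * (1 + |z|) := by
  nlinarith [abs_add_le q z, mul_nonneg (abs_nonneg q) (abs_nonneg z)]

lemma abs_invEstimator_add_le (b q z : ℝ) :
    |invEstimator b (q + z)| ≤ (3 + 2 * b ^ 2) * (1 + |q|) ^ 2 * (1 + |z|) ^ 2 :=
  calc |invEstimator b (q + z)| ≤ (3 + 2 * b ^ 2) * (1 + |q + z|) ^ 2 :=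
        abs_invEstimator_le b (q + z)
    _ ≤ (3 + 2 * b ^ 2) * ((1 + |q|) * (1 + |z|)) ^ 2 := by
        gcongr
        exact one_add_abs_add_le q z
    _ = (3 + 2 * b ^ 2) * (1 + |q|) ^ 2 * (1 + |z|) ^ 2 := by ring

lemma not_integrable_abs_inv_sub_mul {h : ℝ → ℝ} {c : ℝ} (hh : ContinuousAt h c)
    (hc : h c ≠ 0) :
    ¬ Integrable fun x => |(x - c)⁻¹| * h x := by
  intro hint
  have hpole : (fun x => (x - c)⁻¹) =O[𝓝[≠] c] fun x => |(x - c)⁻¹| * h x := by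
    have hone : (fun _ => (1 : ℝ)) =O[𝓝[≠] c] h :=
      (isBigO_const_const 1 hc _).trans <| IsEquivalent.isBigO_symm <|
        (isEquivalent_const_iff_tendsto hc).2 (hh.tendsto.mono_left nhdsWithin_le_nhds)
    simpa using (isBigO_abs_right.2 (isBigO_refl (fun x => (x - c)⁻¹) _)).mul hone
  exact not_intervalIntegrable_of_sub_inv_isBigO_punctured hpole (by linarith : c - 1 ≠ c + 1)
    (Set.mem_uIcc.2 (Or.inl ⟨by linarith, by linarith⟩)) hint.intervalIntegrable

/-- All moments of the unbiased estimator of `1/q` are finite under Laplace(0,b)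
noise, whereas the plug-in estimator `1/(q+Z)` has an infinite first absolute moment. -/
theorem invEstimator_moments_finite_plugin_infinite (b : ℝ) (hb : 0 < b) :
    ∀ q : ℝ, 1 ≤ q →
      (∀ k : ℕ, Integrable (fun z : ℝ => |invEstimator b (q + z)| ^ k * laplacePDF b z)) ∧
      ¬ Integrable (fun z : ℝ => |1 / (q + z)| * laplacePDF b z) := by
  intro q _
  refine ⟨fun k => ?_, ?_⟩
  · refine integrable_mul_laplacePDF_of_abs_le (C := ((3 + 2 * b ^ 2) * (1 + |q|) ^ 2) ^ k)
      (n := 2 * k) hb ?_ fun z => ?_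
    · exact ((measurable_invEstimator b).comp (measurable_const_add q)).abs.pow_const k
        |>.aestronglyMeasurable
    · rw [abs_pow, abs_abs, pow_mul, ← mul_pow]
      exact pow_le_pow_left₀ (abs_nonneg _) (abs_invEstimator_add_le b q z) k
  · have hplugin : (fun z => |1 / (q + z)| * laplacePDF b z)
        = fun z => |(z - -q)⁻¹| * laplacePDF b z := by
      ext z
      rw [one_div, sub_neg_eq_add, add_comm]
    rw [hplugin]
    exact not_integrable_abs_inv_sub_mul (continuous_laplacePDF b).continuousAt
      (laplacePDF_pos hb _).ne'
end

section
/- Let f : [a,∞) → ℝ be concave and strictly increasing with a ≥ 0, and suppose all record values r.c ≥ 0. For the sum query q(D) = Σ_{s∈D} s.c, the per-record sensitivity of D ↦ f(q(D)+a) with respect to record r equals f(r.c + a) − f(a); that is, sup over pairs D, D' = D ∪ {r} of |f(a + Σ_{s∈D} s.c + r.c) − f(a + Σ_{s∈D} s.c)| = f(r.c + a) − f(a). -/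
open Set

/-- Concave increment inequality: for concave `f` on `[a,∞)`, `t, c ≥ 0`,
`f(a+t+c) - f(a+t) ≤ f(a+c) - f(a)`. -/
lemma concave_increment_le (f : ℝ → ℝ) (a t c : ℝ) (ht : 0 ≤ t) (hc : 0 ≤ c)
    (hconc : ConcaveOn ℝ (Ici a) f) :
    f (a + t + c) - f (a + t) ≤ f (a + c) - f a := by
  rcases eq_or_lt_of_le (add_nonneg ht hc) with h0 | hpos
  · have ht0 : t = 0 := by linarith [ht, hc]
    have hc0 : c = 0 := by linarith
    simp [ht0, hc0]
  · set l1 : ℝ := t / (t + c) with hl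
    have hsum : l1 + c / (t + c) = 1 := by
      rw [hl]; field_simp
    have h1 : f (a + c) ≥ l1 * f a + (c / (t + c)) * f (a + t + c) := by
      have := hconc.2 (x := a) (y := a + t + c) (self_mem_Ici)
        (by simp [Ici]; linarith) (div_nonneg ht hpos.le) (div_nonneg hc hpos.le) hsum
      have heq : l1 • a + (c / (t + c)) • (a + t + c) = a + c := by
        rw [hl]; simp only [smul_eq_mul]; field_simp; ring
      rw [heq] at this
      simpa using this
    have h2 : f (a + t) ≥ (c / (t + c)) * f a + l1 * f (a + t + c) := by
      have := hconc.2 (x := a) (y := a + t + c) (self_mem_Ici)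
        (by simp [Ici]; linarith) (div_nonneg hc hpos.le) (div_nonneg ht hpos.le)
        (by linarith [hsum])
      have heq : (c / (t + c)) • a + l1 • (a + t + c) = a + t := by
        rw [hl]; simp only [smul_eq_mul]; field_simp; ring
      rw [heq] at this
      simpa using this
    have hmu : c / (t + c) = 1 - l1 := by linarith
    rw [hmu] at h1 h2
    ring_nf at h1 h2
    have hkey : a + t + c = a + c + t := by ring
    rw [hkey]
    linarith [h1, h2]

/-- Per-record sensitivity of the transformed sum query: for `f` concave and
strictly increasing on `[a,∞)`, `a ≥ 0`, and a record value `c ≥ 0`, the supremum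
over databases (finite multisets of nonnegative record values) of
`|f(a + Σ s + c) - f(a + Σ s)|` equals `f(c + a) - f(a)`, and it is attained. -/
theorem per_record_sensitivity_sum (f : ℝ → ℝ) (a c : ℝ)
    (ha : 0 ≤ a) (hc : 0 ≤ c)
    (hconc : ConcaveOn ℝ (Ici a) f)
    (hmono : StrictMonoOn f (Ici a)) :
    IsGreatest
      {x : ℝ | ∃ D : Multiset ℝ, (∀ s ∈ D, (0 : ℝ) ≤ s) ∧
        x = |f (a + D.sum + c) - f (a + D.sum)|}
      (f (c + a) - f a) := by
  constructor
  · refine ⟨0, by simp, ?_⟩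
    have h : f a ≤ f (a + c) :=
      hmono.monotoneOn self_mem_Ici (by simp [Ici]; linarith) (by linarith)
    rw [abs_of_nonneg (by simpa using h)]
    simp [add_comm]
  · rintro x ⟨D, hD, rfl⟩
    have hDsum : 0 ≤ D.sum := Multiset.sum_nonneg hD
    have hle : f (a + D.sum) ≤ f (a + D.sum + c) :=
      hmono.monotoneOn (by simp [Ici]; linarith) (by simp [Ici]; linarith) (by linarith)
    rw [abs_of_nonneg (by linarith)]
    have := concave_increment_le f a D.sum c hDsum hc hconc
    rw [show c + a = a + c by ring]
    linarith
end

section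
/- Let b > 0 and define, for functions on (−∞, L], the weighted norm ‖u‖ = ∫_{−∞}^{L} |u(x)|·e^{(x−L)/b} dx. If h : (−∞,L] → ℝ is twice continuously differentiable with h'' of at most polynomial growth and p''_K is a sequence of continuous functions with ‖(h'' − p''_K)·e^{(x−L)/(2b)}‖_{L₁} → 0 and p''_K(L) = h''(L), then the antiderivatives p'_K(x) = ∫_L^x p''_K(u) du + h'(L) satisfy ‖(h' − p'_K)‖ → 0, where the first norm uses weight e^{(x−L)/(2b)} in place of e^{(x−L)/b}. -/
open MeasureTheory Real Set Filter Topology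

/-!
Writing `e_K = h'' - p''_K`, the error is `h' x - p'_K x = ∫_L^x e_K`. For `x ≤ L` the weight
`e^{(u-L)/(2b)}` is at least `e^{(x-L)/(2b)}` on `[x, L]`, so
`|h' x - p'_K x| e^{(x-L)/(2b)} ≤ E_K := ∫_{-∞}^L |e_K| e^{(u-L)/(2b)}`. Splitting
`e^{(x-L)/b} = e^{(x-L)/(2b)} e^{(x-L)/(2b)}`, the integrand of the claim is at most
`E_K e^{(x-L)/(2b)}`, whose integral over `(-∞, L]` is `2b E_K → 0`.
-/

lemma integrableOn_exp_sub_div_Iic {a : ℝ} (ha : 0 < a) (L c : ℝ) :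
    IntegrableOn (fun x => exp ((x - L) / a)) (Iic c) := by
  refine IntegrableOn.congr_fun ((integrableOn_exp_mul_Iic (one_div_pos.2 ha) c).mul_const
    (exp (-L / a))) (fun x _ => ?_) measurableSet_Iic
  rw [← exp_add]
  ring_nf

lemma tendsto_integral_zero_of_le_mul {ι α : Type*} [MeasurableSpace α] {μ : Measure α}
    {l : Filter ι} {F : ι → α → ℝ} {E : ι → ℝ} {g : α → ℝ} (hg : Integrable g μ)
    (hF : ∀ K, AEStronglyMeasurable (F K) μ) (hF_nonneg : ∀ K, ∀ᵐ x ∂μ, 0 ≤ F K x)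
    (hF_le : ∀ K, ∀ᵐ x ∂μ, F K x ≤ E K * g x) (hE : Tendsto E l (𝓝 0)) :
    Tendsto (fun K => ∫ x, F K x ∂μ) l (𝓝 0) := by
  have hF_int : ∀ K, Integrable (F K) μ := fun K =>
    (hg.const_mul (E K)).mono' (hF K) <| by
      filter_upwards [hF_nonneg K, hF_le K] with x h0 hle
      rwa [norm_of_nonneg h0]
  have hbound : ∀ K, ∫ x, F K x ∂μ ≤ E K * ∫ x, g x ∂μ := fun K => by
    rw [← integral_const_mul]
    exact integral_mono_ae (hF_int K) (hg.const_mul (E K)) (hF_le K)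
  refine squeeze_zero (fun K => integral_nonneg_of_ae (hF_nonneg K)) hbound ?_
  simpa using hE.mul_const (∫ x, g x ∂μ)

lemma sub_integral_add_eq_integral_sub_of_hasDerivAt {F f g : ℝ → ℝ} {a b : ℝ}
    (hF : ∀ x ∈ uIcc a b, HasDerivAt F (f x) x) (hf : IntervalIntegrable f volume a b)
    (hg : IntervalIntegrable g volume a b) :
    F b - ((∫ u in a..b, g u) + F a) = ∫ u in a..b, (f u - g u) := by
  rw [intervalIntegral.integral_sub hf hg, intervalIntegral.integral_eq_sub_of_hasDerivAt hF hf]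
  ring

lemma abs_intervalIntegral_mul_exp_le_setIntegral_Iic {f : ℝ → ℝ} {c x L : ℝ} (hc : 0 ≤ c)
    (hx : x ≤ L) (hf : IntervalIntegrable f volume x L)
    (hfw : IntegrableOn (fun u => |f u| * exp ((u - L) / c)) (Iic L)) :
    |∫ u in x..L, f u| * exp ((x - L) / c) ≤ ∫ u in Iic L, |f u| * exp ((u - L) / c) :=
  calc |∫ u in x..L, f u| * exp ((x - L) / c)
      ≤ (∫ u in x..L, |f u|) * exp ((x - L) / c) := by
        gcongr
        exact intervalIntegral.abs_integral_le_integral_abs hx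
    _ = ∫ u in x..L, |f u| * exp ((x - L) / c) := (intervalIntegral.integral_mul_const _ _).symm
    _ ≤ ∫ u in x..L, |f u| * exp ((u - L) / c) := by
        refine intervalIntegral.integral_mono_on hx (hf.abs.mul_const _)
          ((intervalIntegrable_iff_integrableOn_Ioc_of_le hx).2
            (hfw.mono_set Ioc_subset_Iic_self)) fun u hu => ?_
        gcongr
        exact hu.1
    _ = ∫ u in Ioc x L, |f u| * exp ((u - L) / c) := intervalIntegral.integral_of_le hx
    _ ≤ ∫ u in Iic L, |f u| * exp ((u - L) / c) :=
        setIntegral_mono_set hfw (.of_forall fun u => by positivity)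
          Ioc_subset_Iic_self.eventuallyLE

lemma abs_intervalIntegral_mul_exp_le_mul_exp_half {f : ℝ → ℝ} {b x L : ℝ} (hb : 0 ≤ b)
    (hx : x ≤ L) (hf : IntervalIntegrable f volume L x)
    (hfw : IntegrableOn (fun u => |f u| * exp ((u - L) / (2 * b))) (Iic L)) :
    |∫ u in L..x, f u| * exp ((x - L) / b)
      ≤ (∫ u in Iic L, |f u| * exp ((u - L) / (2 * b))) * exp ((x - L) / (2 * b)) := by
  have hsplit : exp ((x - L) / b) = exp ((x - L) / (2 * b)) * exp ((x - L) / (2 * b)) := by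
    rw [← exp_add]
    congr 1
    field_simp
    ring
  rw [hsplit, ← mul_assoc, intervalIntegral.integral_symm, abs_neg]
  gcongr
  exact abs_intervalIntegral_mul_exp_le_setIntegral_Iic (by positivity) hx hf.symm hfw

theorem antiderivative_weighted_L1_convergence_general (b L : ℝ) (hb : 0 < b)
    (h' h'' : ℝ → ℝ)
    (hd2 : ∀ x, HasDerivAt h' (h'' x) x)
    (hcont : Continuous h'')
    (p'' : ℕ → ℝ → ℝ) (hp''cont : ∀ K, Continuous (p'' K))
    (hIntErr : ∀ K, Integrable
      (fun x : ℝ => |h'' x - p'' K x| * Real.exp ((x - L) / (2 * b)))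
      (MeasureTheory.volume.restrict (Iic L)))
    (hconv : Filter.Tendsto
      (fun K : ℕ => ∫ x in Iic L, |h'' x - p'' K x| * Real.exp ((x - L) / (2 * b)))
      Filter.atTop (nhds 0)) :
    Filter.Tendsto
      (fun K : ℕ => ∫ x in Iic L,
        |h' x - ((∫ u in L..x, p'' K u) + h' L)| * Real.exp ((x - L) / b))
      Filter.atTop (nhds 0) := by
  have hh' : Continuous h' := continuous_iff_continuousAt.2 fun x => (hd2 x).continuousAt
  refine tendsto_integral_zero_of_le_mul (integrableOn_exp_sub_div_Iic (a := 2 * b) (by positivity) L L)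
    (fun K => ?_) (fun K => .of_forall fun x => by positivity) (fun K => ?_) hconv
  · have hprimitive : Continuous fun x => ∫ u in L..x, p'' K u :=
      intervalIntegral.continuous_primitive (fun _ _ => (hp''cont K).intervalIntegrable _ _) L
    exact ((hh'.sub (hprimitive.add continuous_const)).abs.mul (by fun_prop)).aestronglyMeasurable
  · filter_upwards [ae_restrict_mem measurableSet_Iic] with x hx
    rw [sub_integral_add_eq_integral_sub_of_hasDerivAt (fun u _ => hd2 u)
      (hcont.intervalIntegrable L x) ((hp''cont K).intervalIntegrable L x)]
    exact abs_intervalIntegral_mul_exp_le_mul_exp_half (f := fun u => h'' u - p'' K u) hb.le hx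
      ((hcont.sub (hp''cont K)).intervalIntegrable L x) (hIntErr K)

/-- Integrating approximation errors: if `p''_K → h''` in the weighted L¹ norm with
weight `e^{(x-L)/(2b)}` on `(-∞, L]`, with `p''_K(L) = h''(L)`, then the
antiderivatives `p'_K(x) = ∫_L^x p''_K(u) du + h'(L)` converge to `h'` in the
weighted L¹ norm with weight `e^{(x-L)/b}`. -/
theorem antiderivative_weighted_L1_convergence (b L : ℝ) (hb : 0 < b)
    (h h' h'' : ℝ → ℝ)
    (hd1 : ∀ x, HasDerivAt h (h' x) x)
    (hd2 : ∀ x, HasDerivAt h' (h'' x) x)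
    (hcont : Continuous h'')
    (hgrowth : ∃ C n, ∀ x ≤ L, |h'' x| ≤ C * (1 + |x|) ^ (n : ℕ))
    (p'' : ℕ → ℝ → ℝ) (hp''cont : ∀ K, Continuous (p'' K))
    (hpL : ∀ K, p'' K L = h'' L)
    (hIntErr : ∀ K, Integrable
      (fun x : ℝ => |h'' x - p'' K x| * Real.exp ((x - L) / (2 * b)))
      (MeasureTheory.volume.restrict (Iic L)))
    (hconv : Filter.Tendsto
      (fun K : ℕ => ∫ x in Iic L, |h'' x - p'' K x| * Real.exp ((x - L) / (2 * b)))
      Filter.atTop (nhds 0)) :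
    Filter.Tendsto
      (fun K : ℕ => ∫ x in Iic L,
        |h' x - ((∫ u in L..x, p'' K u) + h' L)| * Real.exp ((x - L) / b))
      Filter.atTop (nhds 0) :=
  antiderivative_weighted_L1_convergence_general b L hb h' h'' hd2 hcont p'' hp''cont hIntErr hconv
end
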